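/- Fix a real number α with 0 < α < 1/2. Let (γ,d) be a graphical two-class PAM instance on n vertices such that |V_1| ≥ αn, |V_2| ≥ αn, 2 ≤ d_i and d_i² ≤ αn/4 for all vertices i (i.e., d_i ≤ √(αn/4)), and 1 ≤ γ ≤ αn/2. Then for every G ∈ G'(γ,d) there exists a sequence of graphs G = G_0, G_1, …, G_t with t ≤ 9 such that every G_i belongs to G'(γ,d), each G_{i+1} is obtained from G_i by a hinge flip, and G_t ∈ G(γ,d). In other words, this family of instances is strongly stable with constant k = 9 for the hinge-flip chain. -/

import Mathlib

open SimpleGraph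
open scoped symmDiff

/-- The degree of vertex `v` in graph `G`. -/
noncomputable def deg {n : ℕ} (G : SimpleGraph (Fin n)) (v : Fin n) : ℕ :=
  (G.neighborSet v).ncard

/-- The number of cut edges of `G`: edges with one endpoint in the class `V₁`
and one endpoint in the class `V₂ = V₁ᶜ`. -/
noncomputable def cutCount {n : ℕ} (V1 : Finset (Fin n)) (G : SimpleGraph (Fin n)) : ℕ :=
  {e ∈ G.edgeSet | ∃ u v : Fin n, e = s(u, v) ∧ u ∈ V1 ∧ v ∉ V1}.ncard

/-- The number of internal edges of `G` inside `V₁`. -/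
noncomputable def intCount1 {n : ℕ} (V1 : Finset (Fin n)) (G : SimpleGraph (Fin n)) : ℕ :=
  {e ∈ G.edgeSet | ∃ u v : Fin n, e = s(u, v) ∧ u ∈ V1 ∧ v ∈ V1}.ncard

/-- The number of internal edges of `G` inside `V₂ = V₁ᶜ`. -/
noncomputable def intCount2 {n : ℕ} (V1 : Finset (Fin n)) (G : SimpleGraph (Fin n)) : ℕ :=
  {e ∈ G.edgeSet | ∃ u v : Fin n, e = s(u, v) ∧ u ∉ V1 ∧ v ∉ V1}.ncard

/-- `G ∈ 𝒢(γ,d)`: vertex `i` has degree `d i` for every `i`, and `G` has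
exactly `γ` cut edges. -/
def memPAM {n : ℕ} (V1 : Finset (Fin n)) (γ : ℕ) (d : Fin n → ℕ)
    (G : SimpleGraph (Fin n)) : Prop :=
  (∀ v, deg G v = d v) ∧ cutCount V1 G = γ

/-- `G ∈ 𝒢'(γ,d)`: the degree sequence `d'` of `G` and its number `γ'` of cut
edges satisfy `Σ d'ᵢ = Σ dᵢ`, `Σ |dᵢ − d'ᵢ| ≤ 4`, and `|γ' − γ| ≤ 1`. -/
def memPAM' {n : ℕ} (V1 : Finset (Fin n)) (γ : ℕ) (d : Fin n → ℕ)
    (G : SimpleGraph (Fin n)) : Prop :=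
  (∑ v, deg G v = ∑ v, d v) ∧
  (∑ v, |(d v : ℤ) - (deg G v : ℤ)| ≤ 4) ∧
  |(cutCount V1 G : ℤ) - (γ : ℤ)| ≤ 1

/-- A hinge flip: replace an edge `{i,j}` of `G` by a non-edge `{j,k}`. -/
def hingeFlip {n : ℕ} (G H : SimpleGraph (Fin n)) : Prop :=
  ∃ i j k : Fin n, G.Adj i j ∧ j ≠ k ∧ ¬ G.Adj j k ∧
    H = (G.deleteEdges {s(i, j)}) ⊔ fromEdgeSet {s(j, k)}


/-!
Since `Σ dᵢ = Σ d'ᵢ` and `Σ |dᵢ - d'ᵢ| ≤ 4`, at most two units of degree have to be moved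
from a vertex `u` of surplus degree to a vertex `w` of deficit degree. One unit is moved by a
"virtual" flip `y–p ↦ p–w` of an edge at a vertex `y` of `u`'s class, realised by two hinge
flips that detour through a vertex `x` of `w`'s class far from `p` and `w`; such an `x` exists
because every class has at least `αn` vertices while a closed neighbourhood carries degree
only about `αn/4`. The edge `y–p` can be chosen so that the cut count stays within one of `γ`,
and if `y ≠ u` is not itself in surplus a second virtual flip passes the unit from `u` to `y`.
Hence at most `2 · 4 = 8` hinge flips produce the degree sequence `d`, and then the cut count
equals `γ` because in every graph it is congruent to `Σ_{v ∈ V₁} deg v` modulo `2`.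
-/

open Finset
open scoped Classical

inductive ReachWithin {α : Type*} (r : α → α → Prop) (P : α → Prop) : ℕ → α → α → Prop
  | refl {a : α} (c : ℕ) : P a → ReachWithin r P c a a
  | step {a b e : α} {c : ℕ} : P a → r a b → ReachWithin r P c b e → ReachWithin r P (c + 1) a e

namespace ReachWithin

variable {α : Type*} {r : α → α → Prop} {P : α → Prop} {a b e : α} {c c' : ℕ}

theorem right (h : ReachWithin r P c a b) : P b := by
  induction h with
  | refl _ ha => exact ha
  | step _ _ _ ih => exact ih

theorem single (ha : P a) (hab : r a b) (hb : P b) : ReachWithin r P 1 a b :=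
  .step ha hab (.refl 0 hb)

theorem mono (h : ReachWithin r P c a b) (hc : c ≤ c') : ReachWithin r P c' a b := by
  induction h generalizing c' with
  | refl _ ha => exact .refl c' ha
  | step ha hab _ ih =>
    obtain ⟨c', rfl⟩ : ∃ c'', c' = c'' + 1 := ⟨c' - 1, by omega⟩
    exact .step ha hab (ih (by omega))

theorem trans (h₁ : ReachWithin r P c a b) (h₂ : ReachWithin r P c' b e) :
    ReachWithin r P (c + c') a e := by
  induction h₁ with
  | refl c _ => exact h₂.mono (by omega)
  | step ha hab _ ih => exact (ih h₂).step ha hab |>.mono (by omega)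

theorem exists_seq (h : ReachWithin r P c a b) :
    ∃ t ≤ c, ∃ f : ℕ → α, f 0 = a ∧ f t = b ∧ (∀ i ≤ t, P (f i)) ∧
      ∀ i < t, r (f i) (f (i + 1)) := by
  induction h with
  | @refl a c ha => exact ⟨0, Nat.zero_le c, fun _ => a, rfl, rfl, fun _ _ => ha, by simp⟩
  | @step a b e c ha hab _ ih =>
    obtain ⟨t, htc, f, hf0, hft, hfP, hfr⟩ := ih
    refine ⟨t + 1, by omega, fun | 0 => a | i + 1 => f i, rfl, hft, ?_, ?_⟩
    · rintro (_ | i) hi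
      exacts [ha, hfP i (by omega)]
    · rintro (_ | i) hi
      exacts [by simpa [hf0] using hab, hfr i (by omega)]

end ReachWithin

theorem two_nsmul_abs_sum_le_sum_abs {ι M : Type*} [Fintype ι] [AddCommGroup M] [LinearOrder M]
    [IsOrderedAddMonoid M] {f : ι → M} (hf : ∑ i, f i = 0) (s : Finset ι) :
    2 • |∑ i ∈ s, f i| ≤ ∑ i, |f i| := by
  have hcompl : ∑ i ∈ sᶜ, f i = -∑ i ∈ s, f i := by
    rw [eq_neg_iff_add_eq_zero, add_comm, sum_add_sum_compl, hf]
  rw [two_nsmul, ← sum_add_sum_compl s]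
  refine add_le_add (abs_sum_le_sum_abs _ _) ?_
  rw [← abs_neg, ← hcompl]
  exact abs_sum_le_sum_abs _ _

namespace SimpleGraph

section HingeFlip

variable {V : Type*} (G : SimpleGraph V)

def hingeFlipAt (i j k : V) : SimpleGraph V :=
  G.deleteEdges {s(i, j)} ⊔ fromEdgeSet {s(j, k)}

variable {G} {i j k : V}

theorem hingeFlipAt_adj {a b : V} :
    (G.hingeFlipAt i j k).Adj a b ↔
      G.Adj a b ∧ s(a, b) ≠ s(i, j) ∨ s(a, b) = s(j, k) ∧ a ≠ b := by
  simp [hingeFlipAt]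

theorem edgeSet_hingeFlipAt (hjk : j ≠ k) :
    (G.hingeFlipAt i j k).edgeSet = insert s(j, k) (G.edgeSet \ {s(i, j)}) := by
  ext e
  induction e using Sym2.ind
  simp only [hingeFlipAt, edgeSet_sup, edgeSet_deleteEdges, edgeSet_fromEdgeSet]
  aesop

theorem ncard_sep_edgeSet_hingeFlipAt [Finite V] (hij : G.Adj i j) (hjk : j ≠ k)
    (hnjk : ¬ G.Adj j k) (p : Sym2 V → Prop) :
    ({e ∈ (G.hingeFlipAt i j k).edgeSet | p e}.ncard : ℤ) =
      {e ∈ G.edgeSet | p e}.ncard - (if p s(i, j) then 1 else 0) +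
        (if p s(j, k) then 1 else 0) := by
  set S := {e ∈ G.edgeSet | p e}
  have hjkS : s(j, k) ∉ S \ {s(i, j)} := fun h => hnjk h.1.1
  have hdel : ((S \ {s(i, j)}).ncard : ℤ) = S.ncard - if p s(i, j) then 1 else 0 := by
    split_ifs with hp
    · have := Set.ncard_sdiff_singleton_add_one (show s(i, j) ∈ S from ⟨hij, hp⟩)
      omega
    · rw [Set.sdiff_singleton_eq_self fun h => hp h.2, sub_zero]
  have hset : {e ∈ (G.hingeFlipAt i j k).edgeSet | p e} =
      if p s(j, k) then insert s(j, k) (S \ {s(i, j)}) else S \ {s(i, j)} := by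
    rw [edgeSet_hingeFlipAt hjk]
    split_ifs with hp <;> ext e <;>
      simp only [S, Set.mem_ofPred_eq, Set.mem_insert_iff, Set.mem_sdiff,
        Set.mem_singleton_iff] <;> aesop
  rw [hset]
  by_cases hp : p s(j, k)
  · rw [if_pos hp, if_pos hp, Set.ncard_insert_of_notMem hjkS, Nat.cast_add, hdel, Nat.cast_one]
  · rw [if_neg hp, if_neg hp, hdel, add_zero]

end HingeFlip

section Darts

variable {V : Type*} [Fintype V] (G : SimpleGraph V) [DecidableRel G.Adj]

def dartsFrom (C : Finset V) : Finset (V × V) :=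
  {p ∈ C ×ˢ univ | G.Adj p.1 p.2}

variable {G} {C W Z : Finset V}

@[simp]
theorem mem_dartsFrom {p : V × V} : p ∈ G.dartsFrom C ↔ p.1 ∈ C ∧ G.Adj p.1 p.2 := by
  simp [dartsFrom]

theorem card_dartsFrom : #(G.dartsFrom C) = ∑ x ∈ C, G.degree x := by
  rw [dartsFrom, card_filter, sum_product]
  refine sum_congr rfl fun x _ => ?_
  rw [← card_neighborFinset_eq_degree, neighborFinset_eq_filter, card_filter]

theorem card_filter_dartsFrom_snd_mem_le [DecidableEq V] :
    #{p ∈ G.dartsFrom C | p.2 ∈ W} ≤ ∑ y ∈ W, G.degree y := by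
  rw [← card_dartsFrom]
  refine card_le_card_of_injOn Prod.swap (fun p hp => ?_) Prod.swap_injective.injOn
  simp only [coe_filter, mem_dartsFrom, Set.mem_ofPred_eq, mem_coe, Prod.fst_swap,
    Prod.snd_swap] at hp ⊢
  exact ⟨hp.2, hp.1.2.symm⟩

theorem exists_adj_of_sum_degree_lt [DecidableEq V]
    (h : ∑ z ∈ Z, G.degree z + ∑ y ∈ W, G.degree y < ∑ x ∈ C, G.degree x) :
    ∃ x ∈ C, ∃ y, G.Adj x y ∧ x ∉ Z ∧ y ∉ W := by
  by_contra! hcon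
  have hsub : G.dartsFrom C ⊆ G.dartsFrom Z ∪ {p ∈ G.dartsFrom C | p.2 ∈ W} := by
    intro p hp
    rw [mem_dartsFrom] at hp
    by_cases hz : p.1 ∈ Z
    · simp [hz, hp.2]
    · simp [hp, hcon p.1 hp.1 p.2 hp.2 hz]
  have := (card_le_card hsub).trans (card_union_le _ _)
  rw [card_dartsFrom, card_dartsFrom] at this
  have := card_filter_dartsFrom_snd_mem_le (G := G) (C := C) (W := W)
  omega

theorem even_card_filter_dartsFrom_snd_mem [LinearOrder V] (C : Finset V) :
    Even #{p ∈ G.dartsFrom C | p.2 ∈ C} := by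
  set S := {p ∈ G.dartsFrom C | p.2 ∈ C}
  have hswap : {p ∈ S | ¬p.1 < p.2} = {p ∈ S | p.1 < p.2}.image Prod.swap := by
    ext ⟨a, b⟩
    simp only [S, mem_filter, mem_dartsFrom, mem_image, Prod.exists, Prod.swap_prod_mk,
      Prod.mk.injEq]
    constructor
    · rintro ⟨⟨⟨ha, hab⟩, hb⟩, hlt⟩
      exact ⟨b, a, ⟨⟨⟨hb, hab.symm⟩, ha⟩, lt_of_le_of_ne (not_lt.mp hlt) hab.ne.symm⟩, rfl, rfl⟩
    · rintro ⟨b, a, ⟨⟨⟨hb, hba⟩, ha⟩, hlt⟩, rfl, rfl⟩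
      exact ⟨⟨⟨ha, hba.symm⟩, hb⟩, not_lt.mpr hlt.le⟩
  rw [← card_filter_add_card_filter_not (fun p : V × V => p.1 < p.2), hswap,
    card_image_of_injective _ Prod.swap_injective]
  exact ⟨_, rfl⟩

end Darts

end SimpleGraph

variable {n : ℕ} {V1 : Finset (Fin n)} {γ : ℕ} {d : Fin n → ℕ} {G H K : SimpleGraph (Fin n)}
  {i j k u v w x : Fin n}

theorem deg_eq_ncard_incidenceSet (G : SimpleGraph (Fin n)) (v : Fin n) :
    deg G v = (G.incidenceSet v).ncard :=
  (Set.ncard_congr' (G.incidenceSetEquivNeighborSet v)).symm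

theorem deg_eq_degree (G : SimpleGraph (Fin n)) (v : Fin n) [Fintype (G.neighborSet v)] :
    deg G v = G.degree v := by
  rw [deg, Set.ncard_eq_toFinset_card', ← card_neighborSet_eq_degree, Set.toFinset_card]

theorem exists_adj_of_deg_pos (h : 0 < deg G v) : ∃ p, G.Adj v p :=
  Set.nonempty_of_ncard_ne_zero h.ne'

theorem hingeFlip_hingeFlipAt (hij : G.Adj i j) (hjk : j ≠ k) (hnjk : ¬ G.Adj j k) :
    hingeFlip G (G.hingeFlipAt i j k) :=
  ⟨i, j, k, hij, hjk, hnjk, rfl⟩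

section Cut

def IsCut (V1 : Finset (Fin n)) (e : Sym2 (Fin n)) : Prop :=
  ∃ u v : Fin n, e = s(u, v) ∧ u ∈ V1 ∧ v ∉ V1

theorem isCut_mk {a b : Fin n} : IsCut V1 s(a, b) ↔ ¬(a ∈ V1 ↔ b ∈ V1) := by
  constructor
  · rintro ⟨u, v, he, hu, hv⟩
    rcases Sym2.eq_iff.mp he with ⟨rfl, rfl⟩ | ⟨rfl, rfl⟩ <;> tauto
  · intro h
    by_cases ha : a ∈ V1
    · exact ⟨a, b, rfl, ha, by tauto⟩
    · exact ⟨b, a, Sym2.eq_swap, by tauto, ha⟩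

theorem cutCount_eq_ncard : cutCount V1 G = {e ∈ G.edgeSet | IsCut V1 e}.ncard := rfl

def cutIndicator (V1 : Finset (Fin n)) (a b : Fin n) : ℤ :=
  if a ∈ V1 ↔ b ∈ V1 then 0 else 1

theorem cutIndicator_of_iff {a b : Fin n} (h : a ∈ V1 ↔ b ∈ V1) : cutIndicator V1 a b = 0 :=
  if_pos h

theorem cutIndicator_of_not_iff {a b : Fin n} (h : ¬(a ∈ V1 ↔ b ∈ V1)) :
    cutIndicator V1 a b = 1 :=
  if_neg h

theorem cutIndicator_eq_of_iff {a b a' b' : Fin n}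
    (h : (a ∈ V1 ↔ b ∈ V1) ↔ (a' ∈ V1 ↔ b' ∈ V1)) :
    cutIndicator V1 a b = cutIndicator V1 a' b' := by
  simp only [cutIndicator, h]

theorem cutCount_hingeFlipAt (hij : G.Adj i j) (hjk : j ≠ k) (hnjk : ¬ G.Adj j k) :
    (cutCount V1 (G.hingeFlipAt i j k) : ℤ) =
      cutCount V1 G - cutIndicator V1 i j + cutIndicator V1 j k := by
  simp only [cutCount_eq_ncard, ncard_sep_edgeSet_hingeFlipAt hij hjk hnjk, isCut_mk,
    cutIndicator, ite_not]

theorem card_filter_dartsFrom_snd_notMem (C : Finset (Fin n)) :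
    #{p ∈ G.dartsFrom C | p.2 ∉ C} = cutCount C G := by
  set S := {p ∈ G.dartsFrom C | p.2 ∉ C}
  have hinj : Set.InjOn (fun p : Fin n × Fin n => s(p.1, p.2)) S := by
    rintro ⟨a, b⟩ hab ⟨a', b'⟩ hab' h
    simp only [S, coe_filter, mem_dartsFrom, Set.mem_ofPred_eq] at hab hab'
    rcases Sym2.eq_iff.mp h with ⟨rfl, rfl⟩ | ⟨rfl, rfl⟩
    · rfl
    · exact absurd hab.1.1 hab'.2
  have himage : (fun p : Fin n × Fin n => s(p.1, p.2)) '' S = {e ∈ G.edgeSet | IsCut C e} := by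
    ext e
    induction e using Sym2.ind with
    | _ a b =>
    simp only [S, isCut_mk, coe_filter, mem_dartsFrom, Set.mem_image, Set.mem_ofPred_eq,
      mem_edgeSet, Prod.exists, Sym2.eq_iff]
    constructor
    · rintro ⟨x, y, ⟨⟨hx, hxy⟩, hy⟩, ⟨rfl, rfl⟩ | ⟨rfl, rfl⟩⟩
      exacts [⟨hxy, by tauto⟩, ⟨hxy.symm, by tauto⟩]
    · rintro ⟨hab, hcut⟩
      by_cases ha : a ∈ C
      · exact ⟨a, b, ⟨⟨ha, hab⟩, by tauto⟩, Or.inl ⟨rfl, rfl⟩⟩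
      · exact ⟨b, a, ⟨⟨by tauto, hab.symm⟩, ha⟩, Or.inr ⟨rfl, rfl⟩⟩
  rw [cutCount_eq_ncard, ← himage, hinj.ncard_image, Set.ncard_coe_finset]

theorem cutCount_mod_two (V1 : Finset (Fin n)) (G : SimpleGraph (Fin n)) :
    cutCount V1 G % 2 = (∑ v ∈ V1, deg G v) % 2 := by
  simp only [deg_eq_degree]
  rw [← card_dartsFrom, ← card_filter_add_card_filter_not (fun p : Fin n × Fin n => p.2 ∈ V1),
    card_filter_dartsFrom_snd_notMem]
  obtain ⟨m, hm⟩ := G.even_card_filter_dartsFrom_snd_mem V1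
  omega

def classOf (V1 : Finset (Fin n)) (v : Fin n) : Finset (Fin n) :=
  {x | x ∈ V1 ↔ v ∈ V1}

@[simp]
theorem mem_classOf : x ∈ classOf V1 v ↔ (x ∈ V1 ↔ v ∈ V1) := by
  simp [classOf]

theorem classOf_eq_ite (V1 : Finset (Fin n)) (v : Fin n) :
    classOf V1 v = if v ∈ V1 then V1 else V1ᶜ := by
  ext x
  split_ifs with hv <;> simp [hv]

theorem cutCount_classOf (V1 : Finset (Fin n)) (v : Fin n) (G : SimpleGraph (Fin n)) :
    cutCount (classOf V1 v) G = cutCount V1 G := by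
  simp only [cutCount_eq_ncard]
  congr 1
  ext e
  induction e using Sym2.ind
  simp only [Set.mem_ofPred_eq, isCut_mk, mem_classOf]
  tauto

theorem exists_adj_across_classOf (v : Fin n) (hcut : 0 < cutCount V1 G) :
    ∃ y ∈ classOf V1 v, ∃ p ∉ classOf V1 v, G.Adj y p := by
  rw [← cutCount_classOf V1 v, ← card_filter_dartsFrom_snd_notMem, card_pos] at hcut
  obtain ⟨⟨y, p⟩, hyp⟩ := hcut
  simp only [mem_filter, mem_dartsFrom] at hyp
  exact ⟨y, hyp.1.1, p, hyp.2, hyp.1.2⟩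

end Cut

section Deviation

def MovesDegree (G H : SimpleGraph (Fin n)) (u w : Fin n) : Prop :=
  ∀ v, (deg H v : ℤ) = deg G v - (if v = u then 1 else 0) + (if v = w then 1 else 0)

theorem movesDegree_hingeFlipAt (hij : G.Adj i j) (hjk : j ≠ k) (hnjk : ¬ G.Adj j k) :
    MovesDegree G (G.hingeFlipAt i j k) i k := by
  have hik : i ≠ k := by rintro rfl; exact hnjk hij.symm
  have hij' := hij.ne
  intro v
  simp only [deg_eq_ncard_incidenceSet, incidenceSet,
    ncard_sep_edgeSet_hingeFlipAt hij hjk hnjk (v ∈ ·), Sym2.mem_iff]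
  split_ifs <;> simp_all

theorem MovesDegree.relay (h₁ : MovesDegree G H x w) (h₂ : MovesDegree H K u x) :
    MovesDegree G K u w := by
  intro v
  rw [h₂, h₁]
  ring

theorem MovesDegree.sum_deg (h : MovesDegree G H u w) : ∑ v, deg H v = ∑ v, deg G v := by
  rw [← Nat.cast_inj (R := ℤ)]
  push_cast
  rw [sum_congr rfl fun v _ => h v]
  simp only [sum_add_distrib, sum_sub_distrib, sum_ite_eq', mem_univ, if_true]
  ring

noncomputable def degDeviation (d : Fin n → ℕ) (G : SimpleGraph (Fin n)) : ℤ :=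
  ∑ v, |(d v : ℤ) - deg G v|

theorem MovesDegree.degDeviation_sub (h : MovesDegree G H u w) (huw : u ≠ w) :
    degDeviation d H - degDeviation d G =
      (|(d u : ℤ) - deg G u + 1| - |(d u : ℤ) - deg G u|) +
        (|(d w : ℤ) - deg G w - 1| - |(d w : ℤ) - deg G w|) := by
  rw [degDeviation, degDeviation, ← sum_sub_distrib,
    Fintype.sum_eq_add u w huw fun v hv => by simp [h v, hv.1, hv.2]]
  simp only [h u, h w, huw, huw.symm, ↓reduceIte, add_zero, sub_zero]
  ring_nf

theorem MovesDegree.degDeviation_le (h : MovesDegree G H u w) (hw : deg G w < d w) :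
    degDeviation d H ≤ degDeviation d G := by
  by_cases huw : u = w
  · subst huw
    have hdeg : ∀ v, deg H v = deg G v := fun v => by have := h v; split_ifs at this <;> omega
    simp [degDeviation, hdeg]
  · have := h.degDeviation_sub (d := d) huw
    simp only [Int.abs_eq_natAbs] at this ⊢
    omega

theorem MovesDegree.degDeviation_eq (h : MovesDegree G H u w) (hu : d u < deg G u)
    (hw : deg G w < d w) : degDeviation d H = degDeviation d G - 2 := by
  have := h.degDeviation_sub (d := d) (by rintro rfl; omega)
  simp only [Int.abs_eq_natAbs] at this ⊢
  omega

theorem deg_eq_of_degDeviation_nonpos (h : degDeviation d G ≤ 0) : ∀ v, deg G v = d v := by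
  have hzero := (sum_eq_zero_iff_of_nonneg fun v _ => abs_nonneg ((d v : ℤ) - deg G v)).mp
    (h.antisymm (sum_nonneg fun v _ => abs_nonneg _))
  intro v
  have := abs_eq_zero.mp (hzero v (mem_univ v))
  omega

end Deviation

namespace memPAM'

variable (hG : memPAM' V1 γ d G)
include hG

theorem of_movesDegree (h : MovesDegree G H u w) (hw : deg G w < d w)
    (hcut : |(cutCount V1 H : ℤ) - γ| ≤ 1) : memPAM' V1 γ d H :=
  ⟨h.sum_deg.trans hG.1, (h.degDeviation_le hw).trans hG.2.1, hcut⟩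

theorem abs_sum_sub_deg_le (T : Finset (Fin n)) : |∑ v ∈ T, ((d v : ℤ) - deg G v)| ≤ 2 := by
  have hsum : ∑ v, ((d v : ℤ) - deg G v) = 0 := by
    rw [sum_sub_distrib, sub_eq_zero]
    exact_mod_cast hG.1.symm
  have := two_nsmul_abs_sum_le_sum_abs hsum T
  have := hG.2.1
  rw [two_nsmul] at *
  omega

theorem sum_deg_le (T : Finset (Fin n)) : ∑ v ∈ T, deg G v ≤ ∑ v ∈ T, d v + 2 := by
  have := abs_le.mp (hG.abs_sum_sub_deg_le T)
  rw [sum_sub_distrib] at this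
  zify
  omega

theorem sum_le_sum_deg (T : Finset (Fin n)) : ∑ v ∈ T, d v ≤ ∑ v ∈ T, deg G v + 2 := by
  have := abs_le.mp (hG.abs_sum_sub_deg_le T)
  rw [sum_sub_distrib] at this
  zify
  omega

theorem exists_surplus_deficit (h : ¬∀ v, deg G v = d v) :
    (∃ u, d u < deg G u) ∧ ∃ w, deg G w < d w := by
  obtain ⟨v, hv⟩ := not_forall.mp h
  have hsum : ∑ v, ((deg G v : ℤ) - d v) = 0 := by
    rw [sum_sub_distrib, sub_eq_zero]
    exact_mod_cast hG.1
  have hsum' : ∑ v, ((d v : ℤ) - deg G v) = 0 := by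
    rw [sum_sub_distrib, sub_eq_zero]
    exact_mod_cast hG.1.symm
  obtain ⟨u, -, hu⟩ := exists_pos_of_sum_zero_of_exists_nonzero _ hsum ⟨v, mem_univ v, by omega⟩
  obtain ⟨w, -, hw⟩ := exists_pos_of_sum_zero_of_exists_nonzero _ hsum' ⟨v, mem_univ v, by omega⟩
  exact ⟨⟨u, by omega⟩, ⟨w, by omega⟩⟩

theorem memPAM_of_deg_eq (hdeg : ∀ v, deg G v = d v) (hgraphical : ∃ H, memPAM V1 γ d H) :
    memPAM V1 γ d G := by
  obtain ⟨H, hHdeg, hHcut⟩ := hgraphical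
  refine ⟨hdeg, ?_⟩
  have hG' := cutCount_mod_two V1 G
  have hH' := cutCount_mod_two V1 H
  simp only [hdeg, hHdeg, hHcut] at hG' hH'
  have := abs_le.mp hG.2.2
  omega

end memPAM'

/-- The hypotheses of the theorem in integral form: `D` is an integer bound for the degrees
that takes the place of `√(αn/4)`. -/
structure SparseRegime (V1 : Finset (Fin n)) (γ : ℕ) (d : Fin n → ℕ) (D : ℕ) : Prop where
  two_le : ∀ i, 2 ≤ d i
  le_bound : ∀ i, d i ≤ D
  four_mul_sq_le_card : ∀ v, 4 * D ^ 2 ≤ #(classOf V1 v)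
  two_mul_le_card : ∀ v, 2 * γ ≤ #(classOf V1 v)

theorem sparseRegime_univ_sup {α : ℝ} (hV1 : α * n ≤ (#V1 : ℝ)) (hV2 : α * n ≤ (#V1ᶜ : ℝ))
    (hdlo : ∀ i, 2 ≤ d i) (hdhi : ∀ i, (d i : ℝ) ^ 2 ≤ α * n / 4)
    (hγhi : (γ : ℝ) ≤ α * n / 2) : SparseRegime V1 γ d (univ.sup d) := by
  have hclass : ∀ v, α * n ≤ (#(classOf V1 v) : ℝ) := fun v => by
    rw [classOf_eq_ite]
    split_ifs <;> assumption
  refine ⟨hdlo, fun i => le_sup (mem_univ i), fun v => ?_, fun v => ?_⟩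
  · obtain ⟨i, -, hi⟩ := exists_mem_eq_sup univ ⟨v, mem_univ v⟩ d
    rw [hi]
    have := hdhi i
    have := hclass v
    exact_mod_cast (by linarith : (4 * d i ^ 2 : ℝ) ≤ #(classOf V1 v))
  · have := hclass v
    exact_mod_cast (by linarith : (2 * γ : ℝ) ≤ #(classOf V1 v))

namespace SparseRegime

variable {D : ℕ} {y p : Fin n} (hR : SparseRegime V1 γ d D) (hG : memPAM' V1 γ d G)
include hR

theorem two_le_bound (v : Fin n) : 2 ≤ D :=
  (hR.two_le v).trans (hR.le_bound v)

include hG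

theorem sum_deg_closedNbhd_le (z : Fin n) :
    ∑ y ∈ insert z (G.neighborFinset z), deg G y ≤ D * (D + 3) + 2 := by
  have hz : deg G z ≤ D + 2 := by
    simpa using (hG.sum_deg_le {z}).trans (Nat.add_le_add_right (by simpa using hR.le_bound z) 2)
  have hcard : #(insert z (G.neighborFinset z)) ≤ D + 3 := by
    have := card_insert_le z (G.neighborFinset z)
    rw [card_neighborFinset_eq_degree, ← deg_eq_degree] at this
    omega
  calc ∑ y ∈ insert z (G.neighborFinset z), deg G y
      ≤ ∑ y ∈ insert z (G.neighborFinset z), d y + 2 := hG.sum_deg_le _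
    _ ≤ #(insert z (G.neighborFinset z)) * D + 2 := by
        grw [sum_le_card_nsmul _ _ D fun y _ => hR.le_bound y, smul_eq_mul]
    _ ≤ D * (D + 3) + 2 := by nlinarith

theorem two_mul_card_le_sum_deg (v : Fin n) :
    2 * #(classOf V1 v) ≤ ∑ y ∈ classOf V1 v, deg G y + 2 := by
  have : ∑ _y ∈ classOf V1 v, 2 ≤ ∑ y ∈ classOf V1 v, d y := sum_le_sum fun y _ => hR.two_le y
  rw [sum_const, smul_eq_mul] at this
  have := hG.sum_le_sum_deg (classOf V1 v)
  omega

theorem exists_adj_notMem_closedNbhd (v z w : Fin n) :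
    ∃ x ∈ classOf V1 v, ∃ q, G.Adj x q ∧ x ∉ insert z (G.neighborFinset z) ∧
      q ∉ insert w (G.neighborFinset w) := by
  apply exists_adj_of_sum_degree_lt
  simp only [← deg_eq_degree]
  have := hR.sum_deg_closedNbhd_le hG z
  have := hR.sum_deg_closedNbhd_le hG w
  have := hR.two_mul_card_le_sum_deg hG v
  have := hR.four_mul_sq_le_card v
  have := hR.two_le_bound v
  nlinarith

theorem exists_adj_within_classOf (v : Fin n) (hcut : cutCount V1 G ≤ γ) :
    ∃ y ∈ classOf V1 v, ∃ p ∈ classOf V1 v, G.Adj y p := by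
  have hlt : #{p ∈ G.dartsFrom (classOf V1 v) | p.2 ∉ classOf V1 v} <
      #(G.dartsFrom (classOf V1 v)) := by
    rw [card_filter_dartsFrom_snd_notMem, cutCount_classOf, card_dartsFrom]
    simp only [← deg_eq_degree]
    have := hR.two_mul_card_le_sum_deg hG v
    have := hR.four_mul_sq_le_card v
    have := hR.two_mul_le_card v
    have := hR.two_le_bound v
    nlinarith
  obtain ⟨⟨y, p⟩, hyp, hp⟩ := exists_mem_notMem_of_card_lt_card hlt
  simp only [mem_filter, hyp, true_and, not_not] at hp
  rw [mem_dartsFrom] at hyp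
  exact ⟨y, hyp.1, p, hp, hyp.2⟩

/-- The flip `y–p ↦ p–w` itself may be impossible because `p` and `w` are adjacent; it is
replaced by the flips `x–q ↦ q–w` and `y–p ↦ p–x` through a vertex `x` of `w`'s class, which
have the same net effect on degrees and cut count. -/
theorem exists_virtual_hingeFlip (hw : deg G w < d w) (hyp : G.Adj y p)
    (hcut : |(cutCount V1 G : ℤ) - cutIndicator V1 y p + cutIndicator V1 p w - γ| ≤ 1) :
    ∃ H, ReachWithin hingeFlip (memPAM' V1 γ d) 2 G H ∧ MovesDegree G H y w := by
  obtain ⟨x, hxw, q, hxq, hxp, hqw⟩ := hR.exists_adj_notMem_closedNbhd hG w p w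
  simp only [mem_classOf, mem_insert, mem_neighborFinset, not_or] at hxw hxp hqw
  have hnqw : ¬G.Adj q w := fun h => hqw.2 h.symm
  set G₁ := G.hingeFlipAt x q w
  have h₁ : MovesDegree G G₁ x w := movesDegree_hingeFlipAt hxq hqw.1 hnqw
  have hcut₁ : cutCount V1 G₁ = cutCount V1 G := by
    have := cutCount_hingeFlipAt (V1 := V1) hxq hqw.1 hnqw
    rw [cutIndicator_eq_of_iff (a := x) (b := q) (a' := q) (b' := w) (by tauto),
      sub_add_cancel] at this
    exact_mod_cast this
  have hG₁ : memPAM' V1 γ d G₁ := hG.of_movesDegree h₁ hw (hcut₁ ▸ hG.2.2)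
  have hyp₁ : G₁.Adj y p := by
    refine hingeFlipAt_adj.mpr (Or.inl ⟨hyp, fun h => ?_⟩)
    rcases Sym2.eq_iff.mp h with ⟨rfl, -⟩ | ⟨-, rfl⟩
    exacts [hxp.2 hyp.symm, hxp.1 rfl]
  have hpx₁ : ¬G₁.Adj p x := by
    rw [hingeFlipAt_adj]
    rintro (⟨h, -⟩ | ⟨h, -⟩)
    · exact hxp.2 h
    · rcases Sym2.eq_iff.mp h with ⟨-, rfl⟩ | ⟨-, rfl⟩
      exacts [hqw.2 hxq, hxq.ne rfl]
  have hpx : p ≠ x := fun h => hxp.1 h.symm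
  have h₂ : MovesDegree G₁ (G₁.hingeFlipAt y p x) y x := movesDegree_hingeFlipAt hyp₁ hpx hpx₁
  have hcut₂ := cutCount_hingeFlipAt (V1 := V1) hyp₁ hpx hpx₁
  rw [hcut₁, cutIndicator_eq_of_iff (a := p) (b := x) (a' := p) (b' := w) (by tauto)] at hcut₂
  have hG₂ := hG.of_movesDegree (h₁.relay h₂) hw (by rwa [hcut₂])
  exact ⟨_, (ReachWithin.single hG (hingeFlip_hingeFlipAt hxq hqw.1 hnqw) hG₁).trans
    (ReachWithin.single hG₁ (hingeFlip_hingeFlipAt hyp₁ hpx hpx₁) hG₂), h₁.relay h₂⟩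

theorem exists_adj_cutCount_band (hu : d u < deg G u) :
    ∃ y p, (y ∈ V1 ↔ u ∈ V1) ∧ G.Adj y p ∧
      |(cutCount V1 G : ℤ) - cutIndicator V1 y p + cutIndicator V1 p w - γ| ≤ 1 := by
  obtain ⟨p, hup⟩ := exists_adj_of_deg_pos (G := G) (v := u) (by omega)
  have hband := abs_le.mp hG.2.2
  by_cases hsame : u ∈ V1 ↔ w ∈ V1
  · refine ⟨u, p, Iff.rfl, hup, ?_⟩
    rw [cutIndicator_eq_of_iff (a := u) (b := p) (a' := w) (b' := p) (by tauto),
      cutIndicator_eq_of_iff (a := p) (b := w) (a' := w) (b' := p) (by tauto)]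
    simpa using hG.2.2
  obtain hlt | heq | hgt :
      (cutCount V1 G : ℤ) < γ ∨ cutCount V1 G = γ ∨ γ < (cutCount V1 G : ℤ) := by
    omega
  · obtain ⟨y, hy, p, hp, hyp⟩ := hR.exists_adj_within_classOf hG u (by omega)
    refine ⟨y, p, mem_classOf.mp hy, hyp, ?_⟩
    simp only [mem_classOf] at hy hp
    rw [cutIndicator_of_iff (by tauto), cutIndicator_of_not_iff (by tauto)]
    exact abs_le.mpr ⟨by omega, by omega⟩
  · refine ⟨u, p, Iff.rfl, hup, ?_⟩
    simp only [cutIndicator]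
    split_ifs <;> exact abs_le.mpr ⟨by omega, by omega⟩
  · obtain ⟨y, hy, p, hp, hyp⟩ := exists_adj_across_classOf u (G := G) (V1 := V1) (by omega)
    refine ⟨y, p, mem_classOf.mp hy, hyp, ?_⟩
    simp only [mem_classOf] at hy hp
    rw [cutIndicator_of_not_iff (by tauto), cutIndicator_of_iff (by tauto)]
    exact abs_le.mpr ⟨by omega, by omega⟩

omit hG in
theorem exists_repair_of_movesDegree {c : ℕ} {G₁ : SimpleGraph (Fin n)} (hu : d u < deg G u)
    (hw : deg G w < d w) (hG₁ : ReachWithin hingeFlip (memPAM' V1 γ d) c G G₁)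
    (h₁ : MovesDegree G G₁ y w) (hyu : y ∈ V1 ↔ u ∈ V1) :
    ∃ H, ReachWithin hingeFlip (memPAM' V1 γ d) (c + 2) G H ∧
      degDeviation d H = degDeviation d G - 2 := by
  by_cases hy : d y < deg G y
  · exact ⟨G₁, hG₁.mono (by omega), h₁.degDeviation_eq hy hw⟩
  have hy₁ : deg G₁ y < d y := by
    have := h₁ y
    rcases eq_or_ne y w with rfl | hyw
    · simp only [↓reduceIte, sub_add_cancel, Nat.cast_inj] at this
      omega
    · simp only [↓reduceIte, hyw, add_zero] at this
      omega
  have hu₁ : deg G₁ u = deg G u := by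
    have := h₁ u
    rw [if_neg (by rintro rfl; omega), if_neg (by rintro rfl; omega)] at this
    omega
  obtain ⟨p, hup⟩ := exists_adj_of_deg_pos (G := G₁) (v := u) (by omega)
  obtain ⟨H, hH, h₂⟩ := hR.exists_virtual_hingeFlip hG₁.right hy₁ hup (by
    rw [cutIndicator_eq_of_iff (a := u) (b := p) (a' := p) (b' := y) (by tauto), sub_add_cancel]
    exact hG₁.right.2.2)
  exact ⟨H, hG₁.trans hH, (h₁.relay h₂).degDeviation_eq hu hw⟩

theorem exists_repair_step (h : ¬∀ v, deg G v = d v) :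
    ∃ H, ReachWithin hingeFlip (memPAM' V1 γ d) 4 G H ∧
      degDeviation d H = degDeviation d G - 2 := by
  obtain ⟨⟨u, hu⟩, w, hw⟩ := hG.exists_surplus_deficit h
  obtain ⟨y, p, hyu, hyp, hcut⟩ := hR.exists_adj_cutCount_band hG (w := w) hu
  obtain ⟨G₁, hG₁, h₁⟩ := hR.exists_virtual_hingeFlip hG hw hyp hcut
  exact hR.exists_repair_of_movesDegree hu hw hG₁ h₁ hyu

omit hG in
theorem exists_reachWithin_deg_eq (m : ℕ) (hG : memPAM' V1 γ d G)
    (hdev : degDeviation d G ≤ 2 * m) :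
    ∃ H, ReachWithin hingeFlip (memPAM' V1 γ d) (4 * m) G H ∧ ∀ v, deg H v = d v := by
  induction m generalizing G with
  | zero => exact ⟨G, .refl 0 hG, deg_eq_of_degDeviation_nonpos (by simpa using hdev)⟩
  | succ m ih =>
    by_cases h : ∀ v, deg G v = d v
    · exact ⟨G, .refl _ hG, h⟩
    obtain ⟨G₁, hG₁, hdev₁⟩ := hR.exists_repair_step hG h
    obtain ⟨H, hH, hdeg⟩ := ih hG₁.right (by omega)
    exact ⟨H, (hG₁.trans hH).mono (by omega), hdeg⟩

end SparseRegime

theorem stmt15_general {n : ℕ} (α : ℝ)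
    (V1 : Finset (Fin n)) (γ : ℕ) (d : Fin n → ℕ)
    (hV1 : α * n ≤ (V1.card : ℝ)) (hV2 : α * n ≤ ((V1ᶜ : Finset (Fin n)).card : ℝ))
    (hdlo : ∀ i, 2 ≤ d i) (hdhi : ∀ i, ((d i : ℝ)) ^ 2 ≤ α * n / 4)
    (hγhi : (γ : ℝ) ≤ α * n / 2)
    (hgraphical : ∃ H : SimpleGraph (Fin n), memPAM V1 γ d H) :
    ∀ G : SimpleGraph (Fin n), memPAM' V1 γ d G →
      ∃ t ≤ 9, ∃ f : ℕ → SimpleGraph (Fin n), f 0 = G ∧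
        (∀ i ≤ t, memPAM' V1 γ d (f i)) ∧
        (∀ i < t, hingeFlip (f i) (f (i+1))) ∧
        memPAM V1 γ d (f t) := by
  intro G hG
  have hR := sparseRegime_univ_sup hV1 hV2 hdlo hdhi hγhi
  obtain ⟨H, hGH, hH⟩ := hR.exists_reachWithin_deg_eq 2 hG hG.2.1
  obtain ⟨t, ht, f, hf0, hft, hfG', hflip⟩ := hGH.exists_seq
  exact ⟨t, by omega, f, hf0, hfG', hflip, hft ▸ hGH.right.memPAM_of_deg_eq hH hgraphical⟩

/-- Theorem D.3, sparse irregular families. Fix `0 < α < 1/2`.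
For any graphical two-class PAM instance with `|V₁|, |V₂| ≥ αn`,
`2 ≤ dᵢ ≤ √(αn/4)` for all `i`, and `1 ≤ γ ≤ αn/2`, every `G ∈ 𝒢'(γ,d)` can be
transformed into an element of `𝒢(γ,d)` by at most `9` hinge flips, all
intermediate graphs staying in `𝒢'(γ,d)`; i.e. this family is strongly stable
with constant `k = 9` for the hinge-flip chain. -/
theorem stmt15 {n : ℕ} (α : ℝ) (hα0 : 0 < α) (hα1 : α < 1 / 2)
    (V1 : Finset (Fin n)) (γ : ℕ) (d : Fin n → ℕ)
    (hV1ne : V1.Nonempty) (hV2ne : V1ᶜ.Nonempty)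
    (hV1 : α * n ≤ (V1.card : ℝ)) (hV2 : α * n ≤ ((V1ᶜ : Finset (Fin n)).card : ℝ))
    (hdlo : ∀ i, 2 ≤ d i) (hdhi : ∀ i, ((d i : ℝ)) ^ 2 ≤ α * n / 4)
    (hγlo : 1 ≤ γ) (hγhi : (γ : ℝ) ≤ α * n / 2)
    (hgraphical : ∃ H : SimpleGraph (Fin n), memPAM V1 γ d H) :
    ∀ G : SimpleGraph (Fin n), memPAM' V1 γ d G →
      ∃ t ≤ 9, ∃ f : ℕ → SimpleGraph (Fin n), f 0 = G ∧
        (∀ i ≤ t, memPAM' V1 γ d (f i)) ∧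
        (∀ i < t, hingeFlip (f i) (f (i+1))) ∧
        memPAM V1 γ d (f t) :=
  stmt15_general α V1 γ d hV1 hV2 hdlo hdhi hγhi hgraphical
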